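/- Suppose messages are noiseless, i.e., for every player j and state ω', P_j(C | ω') > μ(C) implies P_j(C | ω') = 1, and suppose p* > μ(C), where p* = (c − b)/(a − b). Let S_A = {ω' ∈ Ω : there exists a p*-evident C-indicating event F with P_{1−i}(F | ω') ≥ p*} (the set of states where player 1−i, following the rational p-belief strategy, plays A). If at state ω there is no p*-evident C-indicating event F with P_i(F | ω) ≥ p*, then player i's expected payoff from playing A at ω, namely a·P_i(S_A ∩ C | ω) + d·P_i(S_A \ C | ω) + b·P_i(Ω \ S_A | ω), is strictly less than c. -/

import Mathlib

open Finset

variable {Ω : Type*}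

/-- The conditional probability `P_i(E | ω) = μ(E ∩ Π_i(ω)) / μ(Π_i(ω))`,
where `part i ω` is the cell of player `i`'s information partition containing `ω`. -/
noncomputable def condP [Fintype Ω] [DecidableEq Ω] (μ : Ω → ℝ)
    (part : Fin 2 → Ω → Finset Ω) (i : Fin 2) (E : Finset Ω) (ω : Ω) : ℝ :=
  (∑ x ∈ E ∩ part i ω, μ x) / (∑ x ∈ part i ω, μ x)

/-- `E` is `p`-evident: every player `p`-believes `E` at every state of `E`. -/
def pEvident [Fintype Ω] [DecidableEq Ω] (μ : Ω → ℝ)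
    (part : Fin 2 → Ω → Finset Ω) (p : ℝ) (E : Finset Ω) : Prop :=
  ∀ i : Fin 2, ∀ ω ∈ E, p ≤ condP μ part i E ω

/-- `E` is a `p`-evident `C`-indicating event. -/
def pEvidentInd [Fintype Ω] [DecidableEq Ω] (μ : Ω → ℝ)
    (part : Fin 2 → Ω → Finset Ω) (p : ℝ) (C E : Finset Ω) : Prop :=
  pEvident μ part p E ∧ ∀ i : Fin 2, ∀ ω ∈ E, p ≤ condP μ part i C ω

/-- `E` is the largest `p`-evident `C`-indicating event. -/
def isLargestInd [Fintype Ω] [DecidableEq Ω] (μ : Ω → ℝ)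
    (part : Fin 2 → Ω → Finset Ω) (p : ℝ) (C E : Finset Ω) : Prop :=
  pEvidentInd μ part p C E ∧ ∀ F : Finset Ω, pEvidentInd μ part p C F → F ⊆ E

/-- `p` is the `C`-evidence level of `E`: the maximum `q` for which `E` is a
`q`-evident `C`-indicating event. -/
def isEvidenceLevel [Fintype Ω] [DecidableEq Ω] (μ : Ω → ℝ)
    (part : Fin 2 → Ω → Finset Ω) (C E : Finset Ω) (p : ℝ) : Prop :=
  IsGreatest {q : ℝ | pEvidentInd μ part q C E} p

/-- `G` is the maximally evident `C`-indicating superset of `F`. -/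
def isMaxEvidentSup [Fintype Ω] [DecidableEq Ω] (μ : Ω → ℝ)
    (part : Fin 2 → Ω → Finset Ω) (C F G : Finset Ω) : Prop :=
  F ⊆ G ∧ ∃ p : ℝ, isEvidenceLevel μ part C G p ∧ isLargestInd μ part p C G ∧
    ∀ H : Finset Ω, F ⊆ H → ∀ q : ℝ, isEvidenceLevel μ part C H q → q ≤ p

/-- `E` is a maximally evident `C`-indicating event: it is the maximally evident
`C`-indicating superset of some nonempty event. -/
def isMaxEvident [Fintype Ω] [DecidableEq Ω] (μ : Ω → ℝ)
    (part : Fin 2 → Ω → Finset Ω) (C E : Finset Ω) : Prop :=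
  ∃ F : Finset Ω, F.Nonempty ∧ isMaxEvidentSup μ part C F E

/-- `E` is a super-`p`-evident `C`-indicating event. -/
def superEvidentInd [Fintype Ω] [DecidableEq Ω] (μ : Ω → ℝ)
    (part : Fin 2 → Ω → Finset Ω) (p : ℝ) (C E : Finset Ω) : Prop :=
  ∀ i : Fin 2, ∀ ω ∈ E, p < condP μ part i E ω ∧ p < condP μ part i C ω

/-- `E` is the largest super-evident `C`-indicating subset of `F`. -/
def isLargestSuperSub [Fintype Ω] [DecidableEq Ω] (μ : Ω → ℝ)
    (part : Fin 2 → Ω → Finset Ω) (C F E : Finset Ω) : Prop :=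
  E ⊆ F ∧ ∃ p : ℝ, isEvidenceLevel μ part C F p ∧ superEvidentInd μ part p C E ∧
    ∀ G : Finset Ω, G ⊆ F → superEvidentInd μ part p C G → G ⊆ E

/-!
Under noiseless messages and `μ(C) < p*`, every `p*`-evident `C`-indicating event has all
its cells inside `C`. Hence the set `S_A` where player `1 - i` plays `A` lies in `C`, and the
payoff of `A` for player `i` at `ω` is `b + (a - b) P_i(S_A | ω)`, which is below
`c = b + (a - b) p*` as soon as `P_i(S_A | ω) < p*`. If instead `P_i(S_A | ω) ≥ p*`, then
`Π_i(ω) ⊆ C`, and adjoining `S_A ∩ Π_i(ω)` to the largest `p*`-evident `C`-indicating event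
keeps it `p*`-evident and `C`-indicating (player `1 - i` already `p*`-believes the largest
event at states of `S_A`), while player `i` `p*`-believes the result at `ω`.
-/

lemma cell_sum_pos {μ : Ω → ℝ} {s : Finset Ω} {ω : Ω} (hμpos : ∀ x, 0 < μ x) (hω : ω ∈ s) :
    0 < ∑ x ∈ s, μ x :=
  Finset.sum_pos (fun x _ => hμpos x) ⟨ω, hω⟩

section CondP

variable [Fintype Ω] [DecidableEq Ω] {μ : Ω → ℝ} {part : Fin 2 → Ω → Finset Ω}
  {j : Fin 2} {C E F : Finset Ω} {ω x : Ω}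

lemma condP_mono (hμ : ∀ x, 0 ≤ μ x) (h : E ⊆ F) :
    condP μ part j E ω ≤ condP μ part j F ω :=
  div_le_div_of_nonneg_right
    (Finset.sum_le_sum_of_subset_of_nonneg (Finset.inter_subset_inter_right h)
      fun x _ _ => hμ x)
    (Finset.sum_nonneg fun x _ => hμ x)

lemma condP_congr_cell (h : part j x = part j ω) :
    condP μ part j E x = condP μ part j E ω := by
  rw [condP, condP, h]

lemma condP_inter_cell : condP μ part j (E ∩ part j ω) ω = condP μ part j E ω := by
  rw [condP, condP, Finset.inter_assoc, Finset.inter_self]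

@[simp]
lemma condP_empty : condP μ part j ∅ ω = 0 := by
  simp [condP]

lemma condP_univ_sdiff (hμpos : ∀ x, 0 < μ x) (hω : ω ∈ part j ω) :
    condP μ part j (Finset.univ \ E) ω = 1 - condP μ part j E ω := by
  have hsplit : (Finset.univ \ E) ∩ part j ω = part j ω \ (E ∩ part j ω) := by
    ext; simp [and_comm]
  rw [condP, condP, hsplit, Finset.sum_sdiff_eq_sub Finset.inter_subset_right, sub_div,
    div_self (cell_sum_pos hμpos hω).ne']

lemma condP_eq_one_iff (hμpos : ∀ x, 0 < μ x) (hω : ω ∈ part j ω) :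
    condP μ part j C ω = 1 ↔ part j ω ⊆ C := by
  rw [condP, div_eq_one_iff_eq (cell_sum_pos hμpos hω).ne']
  refine ⟨fun h => ?_, fun h => by rw [Finset.inter_eq_right.mpr h]⟩
  by_contra hsub
  obtain ⟨y, hy, hyC⟩ := Finset.not_subset.mp hsub
  exact h.not_lt <| Finset.sum_lt_sum_of_subset Finset.inter_subset_right hy (by simp [hyC])
    (hμpos y) fun z _ _ => (hμpos z).le

end CondP

lemma fin_two_eq_or_eq_one_sub (i j : Fin 2) : j = i ∨ j = 1 - i := by
  revert i j; decide

section Evident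

variable [Fintype Ω] [DecidableEq Ω] {μ : Ω → ℝ} {part : Fin 2 → Ω → Finset Ω}
  {p : ℝ} {C E : Finset Ω}

lemma exists_isLargestInd (hμ : ∀ x, 0 ≤ μ x) (p : ℝ) (C : Finset Ω) :
    ∃ E, isLargestInd μ part p C E := by
  classical
  set E := (Finset.univ.filter (pEvidentInd μ part p C)).biUnion id
  have hmemE : ∀ x ∈ E, ∃ F, pEvidentInd μ part p C F ∧ x ∈ F := by
    intro x hx
    obtain ⟨F, hF, hxF⟩ := Finset.mem_biUnion.mp hx
    exact ⟨F, (Finset.mem_filter.mp hF).2, hxF⟩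
  have hsubE : ∀ F, pEvidentInd μ part p C F → F ⊆ E := fun F hF x hx =>
    Finset.mem_biUnion.mpr ⟨F, Finset.mem_filter.mpr ⟨Finset.mem_univ F, hF⟩, hx⟩
  refine ⟨E, ⟨fun j x hx => ?_, fun j x hx => ?_⟩, hsubE⟩
  · obtain ⟨F, hF, hxF⟩ := hmemE x hx
    exact (hF.1 j x hxF).trans (condP_mono hμ (hsubE F hF))
  · obtain ⟨F, hF, hxF⟩ := hmemE x hx
    exact hF.2 j x hxF

lemma pEvidentInd_of_cell_subset (hμpos : ∀ x, 0 < μ x) (hmem : ∀ j x, x ∈ part j x)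
    (hp1 : p ≤ 1) (h : ∀ j, ∀ x ∈ E, p ≤ condP μ part j E x ∧ part j x ⊆ C) :
    pEvidentInd μ part p C E :=
  ⟨fun j x hx => (h j x hx).1, fun j x hx => by
    rw [(condP_eq_one_iff hμpos (hmem j x)).mpr (h j x hx).2]
    exact hp1⟩

end Evident

def Noiseless [Fintype Ω] [DecidableEq Ω] (μ : Ω → ℝ) (part : Fin 2 → Ω → Finset Ω)
    (C : Finset Ω) : Prop :=
  ∀ (j : Fin 2) (ω : Ω), (∑ x ∈ C, μ x) < condP μ part j C ω → condP μ part j C ω = 1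

namespace Noiseless

variable [Fintype Ω] [DecidableEq Ω] {μ : Ω → ℝ} {part : Fin 2 → Ω → Finset Ω}
  {p : ℝ} {C F : Finset Ω} {j : Fin 2} {x : Ω}

lemma cell_subset (hnl : Noiseless μ part C) (hμpos : ∀ x, 0 < μ x) (hx : x ∈ part j x)
    (h : (∑ y ∈ C, μ y) < condP μ part j C x) : part j x ⊆ C :=
  (condP_eq_one_iff hμpos hx).mp (hnl j x h)

lemma cell_subset_of_pEvidentInd (hnl : Noiseless μ part C) (hμpos : ∀ x, 0 < μ x)
    (hmem : ∀ j x, x ∈ part j x) (hprior : (∑ y ∈ C, μ y) < p)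
    (hF : pEvidentInd μ part p C F) (hx : x ∈ F) : part j x ⊆ C :=
  hnl.cell_subset hμpos (hmem j x) (hprior.trans_le (hF.2 j x hx))

lemma subset_of_pEvidentInd (hnl : Noiseless μ part C) (hμpos : ∀ x, 0 < μ x)
    (hmem : ∀ j x, x ∈ part j x) (hprior : (∑ y ∈ C, μ y) < p)
    (hF : pEvidentInd μ part p C F) : F ⊆ C := fun x hx =>
  hnl.cell_subset_of_pEvidentInd hμpos hmem hprior hF hx (j := 0) (hmem 0 x)

lemma cell_subset_of_le_condP (hnl : Noiseless μ part C) (hμpos : ∀ x, 0 < μ x)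
    (hmem : ∀ j x, x ∈ part j x) (hprior : (∑ y ∈ C, μ y) < p)
    (hF : pEvidentInd μ part p C F) (h : p ≤ condP μ part j F x) : part j x ⊆ C :=
  hnl.cell_subset hμpos (hmem j x) <| hprior.trans_le <| h.trans <|
    condP_mono (fun y => (hμpos y).le) (hnl.subset_of_pEvidentInd hμpos hmem hprior hF)

theorem condP_lt_of_not_believes (hnl : Noiseless μ part C) (hμpos : ∀ x, 0 < μ x)
    (hmem : ∀ j x, x ∈ part j x) (hcell : ∀ j ω x, x ∈ part j ω → part j x = part j ω)
    (hprior : (∑ y ∈ C, μ y) < p) (hp1 : p ≤ 1) {i : Fin 2} {ω : Ω} {S : Finset Ω}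
    (hS : ∀ x ∈ S, ∃ F, pEvidentInd μ part p C F ∧ p ≤ condP μ part (1 - i) F x)
    (hbelief : ¬ ∃ F, pEvidentInd μ part p C F ∧ p ≤ condP μ part i F ω) :
    condP μ part i S ω < p := by
  have hμ : ∀ y, 0 ≤ μ y := fun y => (hμpos y).le
  have hSC : ∀ x ∈ S, part (1 - i) x ⊆ C := fun x hx =>
    let ⟨_, hF, hxF⟩ := hS x hx
    hnl.cell_subset_of_le_condP hμpos hmem hprior hF hxF
  obtain ⟨E, hE, hEmax⟩ := exists_isLargestInd (part := part) hμ p C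
  by_contra! hge
  have hωC : part i ω ⊆ C := hnl.cell_subset hμpos (hmem i ω) <| hprior.trans_le <|
    hge.trans (condP_mono hμ fun x hx => hSC x hx (hmem _ x))
  set G := E ∪ (S ∩ part i ω)
  have hGω : p ≤ condP μ part i G ω :=
    (hge.trans_eq condP_inter_cell.symm).trans (condP_mono hμ Finset.subset_union_right)
  refine hbelief ⟨G, pEvidentInd_of_cell_subset hμpos hmem hp1 fun j x hx => ?_, hGω⟩
  rcases Finset.mem_union.mp hx with hxE | hxS
  · exact ⟨(hE.1 j x hxE).trans (condP_mono hμ Finset.subset_union_left),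
      hnl.cell_subset_of_pEvidentInd hμpos hmem hprior hE hxE⟩
  obtain ⟨hxS, hxω⟩ := Finset.mem_inter.mp hxS
  rcases fin_two_eq_or_eq_one_sub i j with rfl | rfl
  · rw [condP_congr_cell (hcell j ω x hxω), hcell j ω x hxω]
    exact ⟨hGω, hωC⟩
  · obtain ⟨F, hF, hxF⟩ := hS x hxS
    exact ⟨hxF.trans (condP_mono hμ ((hEmax F hF).trans Finset.subset_union_left)), hSC x hxS⟩

end Noiseless

theorem rational_pBelief_play_B_general [Fintype Ω] [DecidableEq Ω]
    (μ : Ω → ℝ) (part : Fin 2 → Ω → Finset Ω)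
    (hμpos : ∀ ω : Ω, 0 < μ ω)
    (hmem : ∀ (i : Fin 2) (ω : Ω), ω ∈ part i ω)
    (hcell : ∀ (i : Fin 2) (ω ω' : Ω), ω' ∈ part i ω → part i ω' = part i ω)
    (a b c d : ℝ) (hac : c < a) (hbc : b < c)
    (C : Finset Ω) (i : Fin 2) (ω : Ω)
    (pstar : ℝ) (hpstar : pstar = (c - b) / (a - b))
    (hnoiseless : ∀ (j : Fin 2) (ω' : Ω),
      (∑ x ∈ C, μ x) < condP μ part j C ω' → condP μ part j C ω' = 1)
    (hprior : (∑ x ∈ C, μ x) < pstar)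
    (SA : Finset Ω)
    (hSA : ∀ ω' : Ω, ω' ∈ SA ↔
      ∃ F : Finset Ω, pEvidentInd μ part pstar C F ∧ pstar ≤ condP μ part (1 - i) F ω')
    (hbelief : ¬ ∃ F : Finset Ω, pEvidentInd μ part pstar C F ∧ pstar ≤ condP μ part i F ω) :
    a * condP μ part i (SA ∩ C) ω + d * condP μ part i (SA \ C) ω +
      b * condP μ part i (Finset.univ \ SA) ω < c := by
  have hab : 0 < a - b := by linarith
  have hp1 : pstar ≤ 1 := by rw [hpstar, div_le_one hab]; linarith
  have hSAC : SA ⊆ C := fun x hx =>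
    let ⟨_, hF, hxF⟩ := (hSA x).mp hx
    Noiseless.cell_subset_of_le_condP hnoiseless hμpos hmem hprior hF hxF (hmem _ x)
  have hlt : condP μ part i SA ω < pstar :=
    Noiseless.condP_lt_of_not_believes hnoiseless hμpos hmem hcell hprior hp1
      (fun x hx => (hSA x).mp hx) hbelief
  rw [Finset.inter_eq_left.mpr hSAC, Finset.sdiff_eq_empty_iff_subset.mpr hSAC, condP_empty,
    condP_univ_sdiff hμpos (hmem i ω)]
  have hc : c = b + (a - b) * pstar := by rw [hpstar]; field_simp; ring
  nlinarith

/-- Rational p-belief strategy, second case: if player `i` does not `p*`-believe any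
`p*`-evident `C`-indicating event at `ω`, then the expected payoff of playing `A` is
strictly less than `c`. -/
theorem rational_pBelief_play_B [Fintype Ω] [DecidableEq Ω] [Nonempty Ω]
    (μ : Ω → ℝ) (part : Fin 2 → Ω → Finset Ω)
    (hμpos : ∀ ω : Ω, 0 < μ ω) (hμsum : ∑ ω : Ω, μ ω = 1)
    (hmem : ∀ (i : Fin 2) (ω : Ω), ω ∈ part i ω)
    (hcell : ∀ (i : Fin 2) (ω ω' : Ω), ω' ∈ part i ω → part i ω' = part i ω)
    (a b c d : ℝ) (hac : c < a) (hbc : b < c) (hdc : d < c)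
    (C : Finset Ω) (i : Fin 2) (ω : Ω)
    (pstar : ℝ) (hpstar : pstar = (c - b) / (a - b))
    (hnoiseless : ∀ (j : Fin 2) (ω' : Ω),
      (∑ x ∈ C, μ x) < condP μ part j C ω' → condP μ part j C ω' = 1)
    (hprior : (∑ x ∈ C, μ x) < pstar)
    (SA : Finset Ω)
    (hSA : ∀ ω' : Ω, ω' ∈ SA ↔
      ∃ F : Finset Ω, pEvidentInd μ part pstar C F ∧ pstar ≤ condP μ part (1 - i) F ω')
    (hbelief : ¬ ∃ F : Finset Ω, pEvidentInd μ part pstar C F ∧ pstar ≤ condP μ part i F ω) :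
    a * condP μ part i (SA ∩ C) ω + d * condP μ part i (SA \ C) ω +
      b * condP μ part i (Finset.univ \ SA) ω < c :=
  rational_pBelief_play_B_general μ part hμpos hmem hcell a b c d hac hbc C i ω pstar hpstar
    hnoiseless hprior SA hSA hbelief
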